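/- arXiv:1409.6159 — 2 statements merged into one kernel-verified Lean document; each statement's English description precedes it below -/
import Mathlib

section
/- Let d be a positive integer that is not a perfect square and let z be a positive integer. Then the sequence of Rédei rational functions Q_n(d,z) = N_n(d,z)/D_n(d,z) converges to √d as n → ∞ in the real numbers. -/
/-!
With `s = √d`, the binomial theorem splits `(z ± s)ⁿ` into even and odd powers of `s`, giving
`(z ± s)ⁿ = N_n(d,z) ± s D_n(d,z)`. Hence `N_n / D_n = s (aⁿ + bⁿ) / (aⁿ - bⁿ)` with `a = z + s` and
`b = z - s`; since `|b| < a`, the ratio `(b / a)ⁿ` tends to `0` and `N_n / D_n` tends to `s`.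
-/

/-- Rédei polynomial `N_n(d,z)` as a real number. -/
noncomputable def redeiN (d z : ℝ) (n : ℕ) : ℝ :=
  ∑ i ∈ Finset.range (n / 2 + 1), (n.choose (2 * i) : ℝ) * d ^ i * z ^ (n - 2 * i)

/-- Rédei polynomial `D_n(d,z)` as a real number. -/
noncomputable def redeiD (d z : ℝ) (n : ℕ) : ℝ :=
  ∑ i ∈ Finset.range (n / 2 + 1), (n.choose (2 * i + 1) : ℝ) * d ^ i * z ^ (n - 2 * i - 1)

open Filter Topology Finset

theorem sum_range_two_mul_eq_sum_even_add_sum_odd {M : Type*} [AddCommMonoid M] (f : ℕ → M)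
    (m : ℕ) :
    ∑ k ∈ range (2 * m), f k = ∑ i ∈ range m, f (2 * i) + ∑ i ∈ range m, f (2 * i + 1) := by
  induction m with
  | zero => simp
  | succ m ih =>
    rw [mul_add_one, sum_range_succ, sum_range_succ, ih, sum_range_succ, sum_range_succ,
      add_assoc, add_add_add_comm]

theorem add_pow_eq_redeiN_add_mul_redeiD {d s : ℝ} (hs : s ^ 2 = d) (z : ℝ) (n : ℕ) :
    (z + s) ^ n = redeiN d z n + s * redeiD d z n := by
  have h_range : ∑ k ∈ range (n + 1), s ^ k * z ^ (n - k) * (n.choose k : ℝ) =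
      ∑ k ∈ range (2 * (n / 2 + 1)), s ^ k * z ^ (n - k) * (n.choose k : ℝ) := by
    refine sum_subset (range_subset_range.2 (by omega)) fun k _ hk => ?_
    simp [Nat.choose_eq_zero_of_lt (show n < k by simpa using hk)]
  rw [add_comm z s, add_pow, h_range, sum_range_two_mul_eq_sum_even_add_sum_odd, redeiN, redeiD,
    mul_sum]
  congr 1 <;> refine sum_congr rfl fun i _ => ?_
  · rw [pow_mul, hs]
    ring
  · rw [pow_succ, pow_mul, hs, Nat.sub_add_eq]
    ring

theorem redeiN_div_redeiD_eq {d s : ℝ} (hs : s ^ 2 = d) (hs0 : s ≠ 0) (z : ℝ) (n : ℕ) :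
    redeiN d z n / redeiD d z n =
      s * (((z + s) ^ n + (z - s) ^ n) / ((z + s) ^ n - (z - s) ^ n)) := by
  have h_plus := add_pow_eq_redeiN_add_mul_redeiD hs z n
  have h_minus := add_pow_eq_redeiN_add_mul_redeiD (s := -s) (by rw [neg_sq, hs]) z n
  have h_sum : (z + s) ^ n + (z - s) ^ n = 2 * redeiN d z n := by
    linear_combination h_plus + h_minus
  have h_diff : (z + s) ^ n - (z - s) ^ n = s * (2 * redeiD d z n) := by
    linear_combination h_plus - h_minus
  rw [h_sum, h_diff, ← mul_div_assoc, mul_div_mul_left _ _ hs0, mul_div_mul_left _ _ two_ne_zero]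

theorem tendsto_pow_add_pow_div_pow_sub_pow {a b : ℝ} (hab : |b| < |a|) :
    Tendsto (fun n : ℕ => (a ^ n + b ^ n) / (a ^ n - b ^ n)) atTop (𝓝 1) := by
  have ha : a ≠ 0 := abs_pos.1 ((abs_nonneg b).trans_lt hab)
  have hr : |b / a| < 1 := by rwa [abs_div, div_lt_one (abs_pos.2 ha)]
  have h_ratio : (fun n : ℕ => (a ^ n + b ^ n) / (a ^ n - b ^ n)) =
      fun n => (1 + (b / a) ^ n) / (1 - (b / a) ^ n) := by
    funext n
    have han : a ^ n ≠ 0 := pow_ne_zero n ha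
    rw [div_pow, ← mul_div_mul_left (1 + _) _ han, mul_add, mul_sub, mul_one,
      mul_div_cancel₀ _ han]
  have h_lim := tendsto_pow_atTop_nhds_zero_of_abs_lt_one hr
  rw [h_ratio]
  simpa [Pi.div_def] using (tendsto_const_nhds.add h_lim).div (tendsto_const_nhds.sub h_lim)
    (by norm_num : (1 : ℝ) - 0 ≠ 0)

theorem tendsto_redeiN_div_redeiD {d z : ℝ} (hd : 0 < d) (hz : 0 < z) :
    Tendsto (fun n : ℕ => redeiN d z n / redeiD d z n) atTop (𝓝 (√d)) := by
  have hs : 0 < √d := Real.sqrt_pos.2 hd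
  have hab : |z - √d| < |z + √d| := by
    rw [abs_of_pos (by positivity : 0 < z + √d), abs_sub_lt_iff]
    constructor <;> linarith
  simp_rw [redeiN_div_redeiD_eq (Real.sq_sqrt hd.le) hs.ne']
  simpa using (tendsto_pow_add_pow_div_pow_sub_pow hab).const_mul (√d)

open Filter in
theorem redei_tendsto_sqrt_general (d : ℤ) (z : ℤ) (hd : 0 < d) (hz : 0 < z) :
    Tendsto (fun n : ℕ => redeiN (d : ℝ) (z : ℝ) n / redeiD (d : ℝ) (z : ℝ) n)
      atTop (nhds (Real.sqrt d)) :=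
  tendsto_redeiN_div_redeiD (by exact_mod_cast hd) (by exact_mod_cast hz)

open Filter in
theorem redei_tendsto_sqrt (d : ℤ) (z : ℤ) (hd : 0 < d) (hsq : ¬ IsSquare d) (hz : 0 < z) :
    Tendsto (fun n : ℕ => redeiN (d : ℝ) (z : ℝ) n / redeiD (d : ℝ) (z : ℝ) n)
      atTop (nhds (Real.sqrt d)) :=
  redei_tendsto_sqrt_general d z hd hz
end

section
/- Fix a positive integer z and let f_n(d) = N_n(d,z)/D_n(d,z) - √d as a real function of d > 0. Then the i-th derivative of f_n at d = z² vanishes for i = 0, 1, ..., n-1. -/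
lemma pair_sum (F : ℕ → ℝ) (m : ℕ) :
    ∑ k ∈ Finset.range (2 * m), F k = ∑ i ∈ Finset.range m, (F (2 * i) + F (2 * i + 1)) := by
  induction m with
  | zero => simp
  | succ m ih =>
    rw [Finset.sum_range_succ, ← ih, mul_add, mul_one, Finset.sum_range_succ,
      Finset.sum_range_succ, ← add_assoc]

lemma redei_key (s z : ℝ) (n : ℕ) :
    (z + s) ^ n = redeiN (s ^ 2) z n + s * redeiD (s ^ 2) z n := by
  have h1 : (z + s) ^ n = ∑ k ∈ Finset.range (n + 1),
      s ^ k * z ^ (n - k) * (n.choose k : ℝ) := by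
    rw [add_comm z s, add_pow]
  rw [h1]
  have hsub : Finset.range (n + 1) ⊆ Finset.range (2 * (n / 2 + 1)) := by
    apply Finset.range_subset_range.2; omega
  rw [Finset.sum_subset hsub (by
    intro k hk hk'
    simp only [Finset.mem_range] at hk hk'
    have : n < k := by omega
    rw [Nat.choose_eq_zero_of_lt this]
    simp)]
  rw [pair_sum, Finset.sum_add_distrib, redeiN, redeiD, Finset.mul_sum]
  congr 1
  · apply Finset.sum_congr rfl
    intro i _
    rw [pow_mul]
    ring
  · apply Finset.sum_congr rfl
    intro i _
    rw [pow_succ, pow_mul]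
    have : n - (2 * i + 1) = n - 2 * i - 1 := by omega
    rw [this]
    ring

/-- The core vanishing lemma. -/
lemma vanish (S : Set ℝ) (hS : IsOpen S) (a : ℝ) (ha : a ∈ S)
    (u : ℝ → ℝ) (hu : ContDiffOn ℝ (⊤ : ℕ∞) u S) (hua : u a = 0) :
    ∀ n : ℕ, ∀ G : ℝ → ℝ, ContDiffOn ℝ (⊤ : ℕ∞) G S → ∀ i, i < n →
      iteratedDeriv i (fun x => u x ^ n * G x) a = 0 := by
  intro n
  induction n with
  | zero => omega
  | succ n IH =>
    intro G hG i hi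
    match i with
    | 0 => simp [iteratedDeriv_zero, hua]
    | (j + 1) =>
      rw [iteratedDeriv_succ']
      set H : ℝ → ℝ := fun x => ((n : ℝ) + 1) * deriv u x * G x + u x * deriv G x with hH
      have hud : ContDiffOn ℝ (⊤ : ℕ∞) (deriv u) S := hu.deriv_of_isOpen hS (mod_cast le_top)
      have hGd : ContDiffOn ℝ (⊤ : ℕ∞) (deriv G) S := hG.deriv_of_isOpen hS (mod_cast le_top)
      have hHs : ContDiffOn ℝ (⊤ : ℕ∞) H S := by
        apply ContDiffOn.add
        · exact (contDiffOn_const.mul hud).mul hG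
        · exact hu.mul hGd
      have heq : deriv (fun x => u x ^ (n + 1) * G x) =ᶠ[nhds a]
          (fun x => u x ^ n * H x) := by
        filter_upwards [hS.mem_nhds ha] with x hx
        have hux : DifferentiableAt ℝ u x :=
          (hu.contDiffAt (hS.mem_nhds hx)).differentiableAt (by simp)
        have hGx : DifferentiableAt ℝ G x :=
          (hG.contDiffAt (hS.mem_nhds hx)).differentiableAt (by simp)
        have h1 : HasDerivAt (fun x => u x ^ (n + 1) * G x)
            ((↑(n + 1) * u x ^ n * deriv u x) * G x + u x ^ (n + 1) * deriv G x) x :=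
          (hux.hasDerivAt.pow (n + 1)).mul hGx.hasDerivAt
        rw [h1.deriv, hH]
        push_cast
        ring
      rw [heq.iteratedDeriv_eq j]
      exact IH H hHs j (by omega)

theorem redei_pade_vanishing_derivatives (z : ℤ) (hz : 0 < z) (n : ℕ) :
    ∀ i : ℕ, i < n →
      iteratedDeriv i (fun d : ℝ => redeiN d (z : ℝ) n / redeiD d (z : ℝ) n - Real.sqrt d)
        ((z : ℝ) ^ 2) = 0 := by
  intro i hi
  have hn : 1 ≤ n := by omega
  have hz0 : (0 : ℝ) < (z : ℝ) := by exact_mod_cast hz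
  -- D is smooth everywhere
  have hD : ContDiff ℝ (⊤ : ℕ∞) (fun d : ℝ => redeiD d (z : ℝ) n) := by
    unfold redeiD
    apply ContDiff.sum
    intro j _
    exact (contDiff_const.mul (contDiff_id.pow j)).mul contDiff_const
  -- value at z²
  have hsq : Real.sqrt ((z : ℝ) ^ 2) = (z : ℝ) := by
    rw [Real.sqrt_sq hz0.le]
  have hkey_plus := redei_key (z : ℝ) (z : ℝ) n
  have hkey_minus := redei_key (-(z : ℝ)) (z : ℝ) n
  rw [neg_pow, show (-1:ℝ)^2 = 1 by norm_num, one_mul] at hkey_minus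
  have hDz : redeiD ((z : ℝ) ^ 2) (z : ℝ) n ≠ 0 := by
    intro h0
    rw [h0, mul_zero, add_zero] at hkey_plus
    rw [h0, mul_zero, add_zero, add_neg_cancel, zero_pow (by omega)] at hkey_minus
    rw [← hkey_minus] at hkey_plus
    have : (0:ℝ) < ((z:ℝ) + z) ^ n := by positivity
    rw [hkey_plus] at this
    exact lt_irrefl 0 this
  -- the open set
  set S : Set ℝ := {d : ℝ | 0 < d ∧ redeiD d (z : ℝ) n ≠ 0} with hSdef
  have hSopen : IsOpen S := by
    have : S = Set.Ioi 0 ∩ (fun d : ℝ => redeiD d (z : ℝ) n) ⁻¹' {0}ᶜ := by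
      ext x; simp [hSdef, Set.mem_setOf_eq]
    rw [this]
    exact isOpen_Ioi.inter (isOpen_compl_singleton.preimage hD.continuous)
  have haS : (z : ℝ) ^ 2 ∈ S := ⟨by positivity, hDz⟩
  -- equality of functions on S
  have heq : (fun d : ℝ => redeiN d (z : ℝ) n / redeiD d (z : ℝ) n - Real.sqrt d)
      =ᶠ[nhds ((z : ℝ) ^ 2)]
      (fun d : ℝ => ((z : ℝ) - Real.sqrt d) ^ n * (redeiD d (z : ℝ) n)⁻¹) := by
    filter_upwards [hSopen.mem_nhds haS] with x hx
    obtain ⟨hx0, hxD⟩ := hx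
    have hs : (Real.sqrt x) ^ 2 = x := Real.sq_sqrt hx0.le
    have hk := redei_key (-(Real.sqrt x)) (z : ℝ) n
    rw [neg_pow, show (-1:ℝ)^2 = 1 by norm_num, one_mul, hs] at hk
    rw [show (z:ℝ) - Real.sqrt x = (z:ℝ) + -Real.sqrt x from sub_eq_add_neg _ _, hk]
    field_simp
    ring
  rw [heq.iteratedDeriv_eq i]
  -- apply vanish
  apply vanish S hSopen ((z : ℝ) ^ 2) haS (fun d => (z : ℝ) - Real.sqrt d)
  · intro x hx
    exact (contDiffAt_const.sub (Real.contDiffAt_sqrt (ne_of_gt hx.1))).contDiffWithinAt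
  · simp [hsq]
  · apply ContDiffOn.inv
    · exact hD.contDiffOn
    · intro x hx; exact hx.2
  · exact hi
end
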